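/- arXiv:2005.05059 — 6 statements merged into one kernel-verified Lean document; each statement's English description precedes it below -/
import Mathlib

section
/- Let E be a nonnegative quadratic form on dom J. The infimum inf{E[v] : v ∈ u + ker J} is attained at a unique point for every u ∈ dom J if and only if dom J is the (algebraic) direct sum H_har ⊕ ker J. Moreover, in that case the minimizer of E over u + ker J is the H_har-component Pu of u, and the minimum equals E[Pu]. -/
/-- The infimum of a nonnegative quadratic form `E` over each fiber
`u + ker J` is attained at a unique point for every `u ∈ dom J` iff
`dom J = H_har ⊕ ker J` (algebraically).  Moreover, in that case the
minimizer over `u + ker J` is the `H_har`-component `p` of `u` and the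
minimum equals `E[p]`. -/
theorem stmt_3 {H Haux : Type*}
    [NormedAddCommGroup H] [InnerProductSpace ℝ H]
    [NormedAddCommGroup Haux] [InnerProductSpace ℝ Haux]
    (D : Submodule ℝ H)
    (E : H →ₗ[ℝ] H →ₗ[ℝ] ℝ)
    (hsymm : ∀ x y : H, E x y = E y x)
    (hpos : ∀ v : D, 0 ≤ E (v : H) (v : H)) (J : D →ₗ[ℝ] Haux) :
    ((∀ u : D, ∃! p : D, J p = J u ∧
        ∀ v : D, J v = J u → E (p : H) (p : H) ≤ E (v : H) (v : H))
      ↔ (∀ u : D, ∃! p : D,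
          (∀ w : D, J w = 0 → E (p : H) (w : H) = 0) ∧ J (u - p) = 0))
    ∧ ((∀ u : D, ∃! p : D,
          (∀ w : D, J w = 0 → E (p : H) (w : H) = 0) ∧ J (u - p) = 0) →
        ∀ u p : D, (∀ w : D, J w = 0 → E (p : H) (w : H) = 0) → J (u - p) = 0 →
          IsLeast {x : ℝ | ∃ v : D, J v = J u ∧ E (v : H) (v : H) = x}
            (E (p : H) (p : H))) := by
  have expand : ∀ (x y : H) (t : ℝ),
      E (x + t • y) (x + t • y) = E x x + 2 * t * E x y + t ^ 2 * E y y := by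
    intro x y t
    simp only [map_add, map_smul, LinearMap.add_apply, LinearMap.smul_apply,
      smul_eq_mul]
    rw [hsymm y x]; ring
  have key : ∀ u p : D, J p = J u →
      ((∀ v : D, J v = J u → E (p : H) (p : H) ≤ E (v : H) (v : H)) ↔
       (∀ w : D, J w = 0 → E (p : H) (w : H) = 0)) := by
    intro u p hpu
    constructor
    · intro hmin w hw
      set a := E (p : H) (w : H) with ha
      set b := E (w : H) (w : H) with hb
      have hbnn : 0 ≤ b := hpos w
      have hquad : ∀ t : ℝ, 0 ≤ 2 * t * a + t ^ 2 * b := by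
        intro t
        have hJ : J (p + t • w) = J u := by
          rw [map_add, map_smul, hw, smul_zero, add_zero, hpu]
        have h1 := hmin (p + t • w) hJ
        have h2 : ((p + t • w : D) : H) = (p : H) + t • (w : H) := by
          push_cast; ring
        rw [h2, expand] at h1
        linarith
      have hq := hquad (-a / (b + 1))
      have hb1 : (0 : ℝ) < b + 1 := by linarith
      have h3 : 0 ≤ (2 * (-a / (b + 1)) * a + (-a / (b + 1)) ^ 2 * b) * (b + 1) ^ 2 :=
        mul_nonneg hq (sq_nonneg _)
      have h4 : (2 * (-a / (b + 1)) * a + (-a / (b + 1)) ^ 2 * b) * (b + 1) ^ 2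
          = -(a ^ 2 * (b + 2)) := by
        field_simp
        ring
      rw [h4] at h3
      nlinarith [sq_nonneg a]
    · intro hhar v hv
      have hw : J (v - p) = 0 := by rw [map_sub, hv, hpu, sub_self]
      have h1 : E (p : H) ((v - p : D) : H) = 0 := hhar _ hw
      have h2 : 0 ≤ E ((v - p : D) : H) ((v - p : D) : H) := hpos _
      have hvc : (v : H) = (p : H) + (1 : ℝ) • ((v - p : D) : H) := by
        push_cast; rw [one_smul]; abel
      have := expand (p : H) ((v - p : D) : H) 1
      rw [← hvc] at this
      rw [this]
      linarith
  have equiv : ∀ u p : D,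
      ((J p = J u ∧ ∀ v : D, J v = J u → E (p : H) (p : H) ≤ E (v : H) (v : H)) ↔
       ((∀ w : D, J w = 0 → E (p : H) (w : H) = 0) ∧ J (u - p) = 0)) := by
    intro u p
    constructor
    · rintro ⟨h1, h2⟩
      exact ⟨(key u p h1).1 h2, by rw [map_sub, h1, sub_self]⟩
    · rintro ⟨h1, h2⟩
      have hpu : J p = J u := by
        rw [map_sub, sub_eq_zero] at h2; exact h2.symm
      exact ⟨hpu, (key u p hpu).2 h1⟩
  constructor
  · exact forall_congr' fun u => existsUnique_congr (equiv u)
  · intro _ u p hhar hup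
    have hpu : J p = J u := by
      rw [map_sub, sub_eq_zero] at hup; exact hup.symm
    constructor
    · exact ⟨p, hpu, rfl⟩
    · rintro x ⟨v, hv, rfl⟩
      exact (key u p hpu).2 hhar v hv
end

section
/- Suppose dom J = H_har ⊕ ker J, 0 is not an eigenvalue of the Dirichlet operator L_D (the self-adjoint operator associated to E restricted to ker J), and λ ∈ ℝ is not an eigenvalue of L_D. Then dom J = H_har(λ) ⊕ ker J, where H_har(λ) = {u ∈ dom J : E(u,v) = λ(u,v) for all v ∈ ker J}. Explicitly, u = (u − u_λ) + u_λ with u_λ = Pu + λ(L_D − λ)⁻¹Pu ∈ H_har(λ) and u − u_λ ∈ ker J. -/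
/-!
`P u` is annihilated by `E` on `ker J`, so the shifted form `E - λ (·, ·)` pairs it with `w`
as `-λ (P u, w)`; adding `λ (L_D - λ)⁻¹ P u ∈ ker J` cancels exactly this. Uniqueness: the
difference of two candidates is a `λ`-eigenvector of `L_D` lying in `ker J`.
-/

open RealInnerProductSpace

section HarmonicSubspace

variable {H Haux : Type*} [NormedAddCommGroup H] [InnerProductSpace ℝ H]
  [AddCommGroup Haux] [Module ℝ Haux] {D : Submodule ℝ H}
  (E : H →ₗ[ℝ] H →ₗ[ℝ] ℝ) (J : D →ₗ[ℝ] Haux) (lam : ℝ)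

/-- `H_har(λ)`; for `λ = 0` this is `H_har`. -/
def harmonicSubspace : Submodule ℝ D where
  carrier := {a | ∀ w : D, J w = 0 → E a w = lam * ⟪(a : H), w⟫}
  add_mem' {a b} ha hb w hw := by
    simp only [Submodule.coe_add, map_add, LinearMap.add_apply, inner_add_left, ha w hw,
      hb w hw, mul_add]
  zero_mem' w _ := by simp
  smul_mem' c a ha w hw := by
    simp only [Submodule.coe_smul, map_smul, LinearMap.smul_apply, real_inner_smul_left,
      smul_eq_mul, ha w hw]
    ring

variable {E J lam}

theorem disjoint_harmonicSubspace_ker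
    (hlam : ¬ ∃ v : D, v ≠ 0 ∧ J v = 0 ∧ ∀ w : D, J w = 0 → E v w = lam * ⟪(v : H), w⟫) :
    Disjoint (harmonicSubspace E J lam) (LinearMap.ker J) := by
  refine Submodule.disjoint_def.mpr fun v hv hker => ?_
  by_contra hne
  exact hlam ⟨v, hne, hker, hv⟩

theorem add_smul_mem_harmonicSubspace {p r : D} (hp : p ∈ harmonicSubspace E J 0)
    (hr : ∀ w : D, J w = 0 → E r w - lam * ⟪(r : H), w⟫ = ⟪(p : H), w⟫) :
    p + lam • r ∈ harmonicSubspace E J lam := by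
  intro w hw
  have hpw : E p w = 0 := by simpa using hp w hw
  simp only [Submodule.coe_add, Submodule.coe_smul, map_add, map_smul, LinearMap.add_apply,
    LinearMap.smul_apply, smul_eq_mul, inner_add_left, real_inner_smul_left, hpw]
  linear_combination lam * hr w hw

end HarmonicSubspace

theorem stmt_7_general {H Haux : Type*}
    [NormedAddCommGroup H] [InnerProductSpace ℝ H]
    [NormedAddCommGroup Haux] [InnerProductSpace ℝ Haux]
    (D : Submodule ℝ H)
    (E : H →ₗ[ℝ] H →ₗ[ℝ] ℝ)
    (J : D →ₗ[ℝ] Haux)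
    (lam : ℝ)
    -- direct sum dom J = H_har ⊕ ker J, with projection P onto H_har
    (P : D → D)
    (hP : ∀ u : D, (∀ w : D, J w = 0 → E ((P u : D) : H) (w : H) = 0) ∧ J (u - P u) = 0)
    -- λ is not an eigenvalue of L_D
    (hlam : ¬ ∃ v : D, v ≠ 0 ∧ J v = 0 ∧
      ∀ w : D, J w = 0 → E (v : H) (w : H) = lam * (inner ℝ (v : H) (w : H) : ℝ))
    -- R = (L_D - λ)⁻¹ in weak form: R f ∈ ker J and E(Rf,w) - λ(Rf,w) = (f,w) ∀ w ∈ ker J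
    (R : D → D)
    (hRker : ∀ f : D, J (R f) = 0)
    (hR : ∀ f w : D, J w = 0 →
      E ((R f : D) : H) (w : H) - lam * (inner ℝ ((R f : D) : H) (w : H) : ℝ) = (inner ℝ (f : H) (w : H) : ℝ)) :
    ∀ u : D,
      J (u - (P u + lam • R (P u))) = 0
      ∧ (∀ w : D, J w = 0 →
          E ((P u + lam • R (P u) : D) : H) (w : H)
            = lam * (inner ℝ ((P u + lam • R (P u) : D) : H) (w : H) : ℝ))
      ∧ (∀ a : D,
          (∀ w : D, J w = 0 → E (a : H) (w : H) = lam * (inner ℝ (a : H) (w : H) : ℝ)) →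
          J (u - a) = 0 → a = P u + lam • R (P u)) := by
  intro u
  have hPu : P u ∈ harmonicSubspace E J 0 := fun w hw => by simpa using (hP u).1 w hw
  have hmem : P u + lam • R (P u) ∈ harmonicSubspace E J lam :=
    add_smul_mem_harmonicSubspace hPu (hR (P u))
  have hker : J (u - (P u + lam • R (P u))) = 0 := by
    rw [← sub_sub, map_sub, map_smul, (hP u).2, hRker, smul_zero, sub_zero]
  refine ⟨hker, hmem, fun a ha hua => ?_⟩
  refine (LinearMap.disjoint_ker_iff_injOn.mp (disjoint_harmonicSubspace_ker hlam)) ha hmem ?_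
  rw [map_sub] at hker hua
  exact (sub_eq_zero.mp hua).symm.trans (sub_eq_zero.mp hker)

/-- If `dom J = H_har ⊕ ker J`, `0` is not an eigenvalue of the Dirichlet
operator `L_D` and `λ` is not an eigenvalue of `L_D` (eigenvalues encoded
weakly via the form `E` on `ker J`), then `dom J = H_har(λ) ⊕ ker J`.
Explicitly, with `R = (L_D - λ)⁻¹` (encoded by its weak formulation),
`u = (u - u_λ) + u_λ` where `u_λ = Pu + λ R(Pu) ∈ H_har(λ)` and
`u - u_λ ∈ ker J`, and the `H_har(λ)`-component is unique. -/
theorem stmt_7 {H Haux : Type*}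
    [NormedAddCommGroup H] [InnerProductSpace ℝ H]
    [NormedAddCommGroup Haux] [InnerProductSpace ℝ Haux]
    (D : Submodule ℝ H)
    (E : H →ₗ[ℝ] H →ₗ[ℝ] ℝ)
    (hsymm : ∀ x y : H, E x y = E y x)
    (hpos : ∀ v : D, 0 ≤ E (v : H) (v : H))
    (J : D →ₗ[ℝ] Haux)
    (lam : ℝ)
    -- direct sum dom J = H_har ⊕ ker J, with projection P onto H_har
    (P : D → D)
    (hP : ∀ u : D, (∀ w : D, J w = 0 → E ((P u : D) : H) (w : H) = 0) ∧ J (u - P u) = 0)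
    (huniq : ∀ u p : D, (∀ w : D, J w = 0 → E (p : H) (w : H) = 0) → J (u - p) = 0 →
      p = P u)
    -- 0 is not an eigenvalue of L_D
    (h0 : ¬ ∃ v : D, v ≠ 0 ∧ J v = 0 ∧ ∀ w : D, J w = 0 → E (v : H) (w : H) = 0)
    -- λ is not an eigenvalue of L_D
    (hlam : ¬ ∃ v : D, v ≠ 0 ∧ J v = 0 ∧
      ∀ w : D, J w = 0 → E (v : H) (w : H) = lam * (inner ℝ (v : H) (w : H) : ℝ))
    -- R = (L_D - λ)⁻¹ in weak form: R f ∈ ker J and E(Rf,w) - λ(Rf,w) = (f,w) ∀ w ∈ ker J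
    (R : D → D)
    (hRker : ∀ f : D, J (R f) = 0)
    (hR : ∀ f w : D, J w = 0 →
      E ((R f : D) : H) (w : H) - lam * (inner ℝ ((R f : D) : H) (w : H) : ℝ) = (inner ℝ (f : H) (w : H) : ℝ)) :
    ∀ u : D,
      J (u - (P u + lam • R (P u))) = 0
      ∧ (∀ w : D, J w = 0 →
          E ((P u + lam • R (P u) : D) : H) (w : H)
            = lam * (inner ℝ ((P u + lam • R (P u) : D) : H) (w : H) : ℝ))
      ∧ (∀ a : D,
          (∀ w : D, J w = 0 → E (a : H) (w : H) = lam * (inner ℝ (a : H) (w : H) : ℝ)) →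
          J (u - a) = 0 → a = P u + lam • R (P u)) :=
  stmt_7_general D E J lam P hP hlam R hRker hR
end

section
/- Under the direct sum decomposition dom J = H_har(λ) ⊕ ker J for λ ∉ σ(L_D), the singular trace form satisfies the representation formula Ě_λ[ψ] = Ě[ψ] − λ (L_D(L_D − λ)⁻¹ Πψ, Πψ) for every ψ ∈ ran J, where Ě_λ[ψ] := E[P_λ u] − λ‖P_λ u‖² with Ju = ψ and P_λ u the H_har(λ)-component of u, Ě = Ě_0, and Π is the Poisson operator Π(Ju) = Pu. -/
/-! Expanding the quadratic form at `Pu + λ R(Pu)`, the cross terms `E(Pu, R Pu)` vanish because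
`Pu` is `E`-orthogonal to `ker J ∋ R Pu`, and testing the weak resolvent equation for `R Pu`
against `R Pu` itself turns `E[R Pu] - λ‖R Pu‖²` into `(Pu, R Pu)`. -/

theorem bilin_add_smul_sub_mul_norm_sq_eq {H : Type*} [NormedAddCommGroup H]
    [InnerProductSpace ℝ H] (E : H →ₗ[ℝ] H →ₗ[ℝ] ℝ) (lam : ℝ) {p r : H}
    (hpr : E p r = 0) (hrp : E r p = 0)
    (hr : E r r - lam * inner ℝ r r = inner ℝ p r) :
    E (p + lam • r) (p + lam • r) - lam * ‖p + lam • r‖ ^ 2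
      = E p p - lam * inner ℝ (p + lam • r) p := by
  rw [← real_inner_self_eq_norm_sq]
  simp only [map_add, map_smul, LinearMap.add_apply, LinearMap.smul_apply, smul_eq_mul,
    inner_add_left, inner_add_right, real_inner_smul_left, real_inner_smul_right,
    real_inner_comm p r]
  linear_combination lam * hpr + lam * hrp + lam ^ 2 * hr

theorem stmt_8_general {H Haux : Type*}
    [NormedAddCommGroup H] [InnerProductSpace ℝ H]
    [NormedAddCommGroup Haux] [InnerProductSpace ℝ Haux]
    (D : Submodule ℝ H)
    (E : H →ₗ[ℝ] H →ₗ[ℝ] ℝ)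
    (hsymm : ∀ x y : H, E x y = E y x)
    (J : D →ₗ[ℝ] Haux)
    (lam : ℝ)
    (P : D → D)
    (hP : ∀ u : D, (∀ w : D, J w = 0 → E ((P u : D) : H) (w : H) = 0) ∧ J (u - P u) = 0)
    (R : D → D)
    (hRker : ∀ f : D, J (R f) = 0)
    (hR : ∀ f w : D, J w = 0 →
      E ((R f : D) : H) (w : H) - lam * (inner ℝ ((R f : D) : H) (w : H) : ℝ)
        = (inner ℝ (f : H) (w : H) : ℝ)) :
    ∀ u : D,
      E ((P u + lam • R (P u) : D) : H) ((P u + lam • R (P u) : D) : H)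
          - lam * ‖((P u + lam • R (P u) : D) : H)‖ ^ 2
        = E ((P u : D) : H) ((P u : D) : H)
          - lam * (inner ℝ (((P u : D) : H) + lam • ((R (P u) : D) : H)) ((P u : D) : H) : ℝ) := by
  intro u
  have hpr : E (P u : H) (R (P u) : H) = 0 := (hP u).1 _ (hRker _)
  exact bilin_add_smul_sub_mul_norm_sq_eq E lam hpr (hsymm _ _ ▸ hpr) (hR _ _ (hRker _))

/-- Representation formula for the singular trace form.  With
`P` the projection onto `H_har` along `ker J`, `R = (L_D - λ)⁻¹`
(weak formulation) and `P_λ u = Pu + λ R(Pu)` the `H_har(λ)`-component of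
`u`, one has, writing `Πψ = Pu` for `ψ = Ju` and using
`L_D(L_D-λ)⁻¹ = 1 + λ(L_D-λ)⁻¹`:
`Ě_λ[ψ] = E[P_λ u] - λ‖P_λ u‖² = Ě[ψ] - λ (Πψ + λ R Πψ, Πψ)`. -/
theorem stmt_8 {H Haux : Type*}
    [NormedAddCommGroup H] [InnerProductSpace ℝ H]
    [NormedAddCommGroup Haux] [InnerProductSpace ℝ Haux]
    (D : Submodule ℝ H)
    (E : H →ₗ[ℝ] H →ₗ[ℝ] ℝ)
    (hsymm : ∀ x y : H, E x y = E y x)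
    (hpos : ∀ v : D, 0 ≤ E (v : H) (v : H))
    (J : D →ₗ[ℝ] Haux)
    (lam : ℝ)
    (P : D → D)
    (hP : ∀ u : D, (∀ w : D, J w = 0 → E ((P u : D) : H) (w : H) = 0) ∧ J (u - P u) = 0)
    (huniq : ∀ u p : D, (∀ w : D, J w = 0 → E (p : H) (w : H) = 0) → J (u - p) = 0 →
      p = P u)
    (hlam : ¬ ∃ v : D, v ≠ 0 ∧ J v = 0 ∧
      ∀ w : D, J w = 0 → E (v : H) (w : H) = lam * (inner ℝ (v : H) (w : H) : ℝ))
    (R : D → D)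
    (hRker : ∀ f : D, J (R f) = 0)
    (hR : ∀ f w : D, J w = 0 →
      E ((R f : D) : H) (w : H) - lam * (inner ℝ ((R f : D) : H) (w : H) : ℝ)
        = (inner ℝ (f : H) (w : H) : ℝ)) :
    ∀ u : D,
      E ((P u + lam • R (P u) : D) : H) ((P u + lam • R (P u) : D) : H)
          - lam * ‖((P u + lam • R (P u) : D) : H)‖ ^ 2
        = E ((P u : D) : H) ((P u : D) : H)
          - lam * (inner ℝ (((P u : D) : H) + lam • ((R (P u) : D) : H)) ((P u : D) : H) : ℝ) :=
  stmt_8_general D E hsymm J lam P hP R hRker hR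
end

section
/- With Ě_z[ψ] = Ě[ψ] − z (L_D(L_D − z)⁻¹ Πψ, Πψ) and E an eigenvalue of L_D with eigenprojection P_E, one has lim_{z→E} (z − E) Ě_z[ψ] = E ‖L_D^{1/2} P_E Πψ‖² for every ψ ∈ ran J. Consequently, if P_E Πψ ≠ 0 then Ě_λ[ψ] → −∞ as λ ↑ E and Ě_λ[ψ] → +∞ as λ ↓ E. -/
/-!
Only the eigenvalues equal to `E0` make the series singular at `E0`: they contribute exactly
`E0 / (E0 - z) · ∑_{Ev k = E0} |(b k, v)|²`. Since `Ev → ∞`, the remaining eigenvalues keep a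
positive distance from `E0`, so the rest of the series is bounded near `E0` and is killed by the
factor `z - E0`. For real `λ` the residue `E0² ∑_{Ev k = E0} |(b k, v)|²` is positive as soon as
`P_{E0} v ≠ 0`, and the sign of `(λ - E0)⁻¹` gives the two one-sided blow-ups.
-/

open Filter Topology Asymptotics

theorem Filter.Tendsto.exists_pos_le_abs_sub {ι : Type*} {f : ι → ℝ}
    (hf : Tendsto f cofinite atTop) (x : ℝ) : ∃ δ > 0, ∀ i, f i ≠ x → δ ≤ |f i - x| := by
  have hlow : {i | f i ≤ x + 1}.Finite := by
    simpa only [not_lt] using eventually_cofinite.mp (hf.eventually_gt_atTop (x + 1))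
  have hT : ((f '' {i | f i ≤ x + 1}) \ {x})ᶜ ∈ 𝓝 x :=
    ((hlow.image f).sdiff).isClosed.compl_mem_nhds fun h => h.2 rfl
  obtain ⟨ε, hε, hball⟩ := Metric.mem_nhds_iff.mp hT
  refine ⟨min ε 1, lt_min hε one_pos, fun i hi => ?_⟩
  rcases le_or_gt (f i) (x + 1) with hle | hgt
  · have : f i ∉ Metric.ball x ε := fun hb => hball hb ⟨⟨i, hle, rfl⟩, hi⟩
    rw [Metric.mem_ball, Real.dist_eq, not_lt] at this
    exact (min_le_left _ _).trans this
  · exact (min_le_right _ _).trans (by rw [abs_of_pos (by linarith)]; linarith)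

theorem RCLike.norm_ofReal_div_ofReal_sub_le {𝕜 : Type*} [RCLike 𝕜] {e x δ : ℝ} {z : 𝕜}
    (hδ : 0 < δ) (he : δ ≤ |e - x|) (hz : ‖z - x‖ ≤ δ / 2) :
    ‖(e : 𝕜) / (e - z)‖ ≤ 2 * (1 + |x| / δ) := by
  have hex : 0 < |e - x| := hδ.trans_le he
  have hden : |e - x| / 2 ≤ ‖(e : 𝕜) - z‖ := by
    have : ‖((e - x : ℝ) : 𝕜)‖ - ‖z - x‖ ≤ ‖(e : 𝕜) - z‖ := by
      simpa using norm_sub_norm_le ((e - x : ℝ) : 𝕜) (z - x)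
    rw [RCLike.norm_ofReal] at this
    linarith
  have hnum : ‖(e : 𝕜)‖ ≤ |e - x| + |x| := by
    simpa [RCLike.norm_ofReal] using abs_add_le (e - x) x
  calc ‖(e : 𝕜) / (e - z)‖ = ‖(e : 𝕜)‖ / ‖(e : 𝕜) - z‖ := norm_div _ _
    _ ≤ (|e - x| + |x|) / (|e - x| / 2) := by gcongr
    _ = 2 * (1 + |x| / |e - x|) := by field_simp
    _ ≤ 2 * (1 + |x| / δ) := by gcongr

section Resolvent

variable {𝕜 ι : Type*} [RCLike 𝕜] {Ev : ι → ℝ} {a : ι → 𝕜}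

theorem eventually_norm_resolvent_term_le (hEv : Tendsto Ev cofinite atTop) (x : ℝ) :
    ∃ C, ∀ᶠ z in 𝓝 (x : 𝕜), ∀ k,
      ‖if Ev k = x then 0 else (Ev k : 𝕜) / (Ev k - z) * a k‖ ≤ C * ‖a k‖ := by
  obtain ⟨δ, hδ, hgap⟩ := hEv.exists_pos_le_abs_sub x
  refine ⟨2 * (1 + |x| / δ), ?_⟩
  filter_upwards [Metric.closedBall_mem_nhds (x : 𝕜) (half_pos hδ)] with z hz k
  split_ifs with hk
  · rw [norm_zero]; positivity
  · rw [norm_mul]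
    gcongr
    exact RCLike.norm_ofReal_div_ofReal_sub_le hδ (hgap k hk) (by rwa [← dist_eq_norm])

theorem tendsto_sub_mul_sub_mul_tsum_resolvent (hEv : Tendsto Ev cofinite atTop)
    (ha : Summable (‖a ·‖)) (c : 𝕜) (x : ℝ) :
    Tendsto (fun z : 𝕜 => (z - x) * (c - z * ∑' k, (Ev k : 𝕜) / (Ev k - z) * a k))
      (𝓝[≠] (x : 𝕜)) (𝓝 (x * (x * ∑' k, if Ev k = x then a k else 0))) := by
  obtain ⟨C, hC⟩ := eventually_norm_resolvent_term_le (a := a) hEv x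
  set R : 𝕜 → 𝕜 := fun z => ∑' k, if Ev k = x then 0 else (Ev k : 𝕜) / (Ev k - z) * a k
  set A : 𝕜 := ∑' k, if Ev k = x then a k else 0
  have hR : R =O[𝓝 (x : 𝕜)] (fun _ => (1 : 𝕜)) :=
    (isBigO_one_iff 𝕜).2 <| isBoundedUnder_of_eventually_le <|
      hC.mono fun z hz => tsum_of_norm_bounded (ha.hasSum.mul_left C) hz
  have hA : Summable fun k => if Ev k = x then a k else 0 :=
    .of_norm_bounded ha fun k => by split_ifs <;> simp
  have hsplit : ∀ᶠ z in 𝓝[≠] (x : 𝕜),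
      (z - x) * (c - z * R z) + z * x * A
        = (z - x) * (c - z * ∑' k, (Ev k : 𝕜) / (Ev k - z) * a k) := by
    filter_upwards [nhdsWithin_le_nhds hC, self_mem_nhdsWithin] with z hz hzx
    have hxz : (x : 𝕜) - z ≠ 0 := sub_ne_zero.2 (Ne.symm hzx)
    have hterm : ∀ k, (Ev k : 𝕜) / (Ev k - z) * a k = x / (x - z) * (if Ev k = x then a k else 0)
        + if Ev k = x then 0 else (Ev k : 𝕜) / (Ev k - z) * a k := fun k => by
      split_ifs with hk <;> simp [hk]
    have hsum : ∑' k, (Ev k : 𝕜) / (Ev k - z) * a k = x / (x - z) * A + R z := by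
      rw [tsum_congr hterm, (hA.mul_left _).tsum_add (.of_norm_bounded (ha.mul_left C) hz),
        tsum_mul_left]
    rw [hsum]
    generalize R z = r
    field_simp
    ring
  have hsmall : Tendsto (fun z : 𝕜 => (z - x) * (c - z * R z)) (𝓝 (x : 𝕜)) (𝓝 0) := by
    have hO : (fun z : 𝕜 => c - z * R z) =O[𝓝 (x : 𝕜)] (fun _ => (1 : 𝕜)) :=
      (tendsto_const_nhds.isBigO_one 𝕜).sub <| by
        simpa using (tendsto_id.isBigO_one 𝕜).mul hR
    refine ((isBigO_refl (fun z : 𝕜 => z - x) _).mul hO).trans_tendsto ?_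
    simpa using tendsto_sub_nhds_zero_iff.2 tendsto_id
  have hpole : Tendsto (fun z : 𝕜 => z * x * A) (𝓝 (x : 𝕜)) (𝓝 (x * x * A)) :=
    (continuous_id.mul continuous_const |>.mul continuous_const).tendsto _
  have := ((hsmall.add hpole).mono_left nhdsWithin_le_nhds).congr' hsplit
  simpa [mul_assoc] using this

end Resolvent

theorem tendsto_atBot_of_tendsto_sub_mul {f : ℝ → ℝ} {x L : ℝ} {s : Set ℝ} (hs : s ⊆ Set.Iio x)
    (hL : 0 < L) (h : Tendsto (fun y => (y - x) * f y) (𝓝[s] x) (𝓝 L)) :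
    Tendsto f (𝓝[s] x) atBot := by
  have hinv : Tendsto (fun y => (y - x)⁻¹) (𝓝[s] x) atBot :=
    Tendsto.inv_tendsto_nhdsLT_zero <| tendsto_nhdsWithin_iff.2
      ⟨(tendsto_sub_nhds_zero_iff.2 tendsto_id).mono_left nhdsWithin_le_nhds,
        eventually_mem_nhdsWithin.mono fun y hy => Set.mem_Iio.2 (sub_neg.2 (hs hy))⟩
  refine (h.pos_mul_atBot hL hinv).congr' ?_
  filter_upwards [eventually_mem_nhdsWithin] with y hy
  rw [mul_comm, inv_mul_cancel_left₀ (sub_ne_zero.2 (Set.mem_Iio.1 (hs hy)).ne)]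

theorem tendsto_atTop_of_tendsto_sub_mul {f : ℝ → ℝ} {x L : ℝ} {s : Set ℝ} (hs : s ⊆ Set.Ioi x)
    (hL : 0 < L) (h : Tendsto (fun y => (y - x) * f y) (𝓝[s] x) (𝓝 L)) :
    Tendsto f (𝓝[s] x) atTop := by
  have hinv : Tendsto (fun y => (y - x)⁻¹) (𝓝[s] x) atTop :=
    Tendsto.inv_tendsto_nhdsGT_zero <| tendsto_nhdsWithin_iff.2
      ⟨(tendsto_sub_nhds_zero_iff.2 tendsto_id).mono_left nhdsWithin_le_nhds,
        eventually_mem_nhdsWithin.mono fun y hy => Set.mem_Ioi.2 (sub_pos.2 (hs hy))⟩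
  refine (h.pos_mul_atTop hL hinv).congr' ?_
  filter_upwards [eventually_mem_nhdsWithin] with y hy
  rw [mul_comm, inv_mul_cancel_left₀ (sub_ne_zero.2 (Set.mem_Ioi.1 (hs hy)).ne')]

/-- Laurent asymptotics near a Dirichlet eigenvalue.  With
`Ě_z[ψ] = c - z ∑ₖ Ev k/(Ev k - z) |(b k, v)|²` (where `v = Πψ` and
`c = Ě[ψ]`), and `E0 = Ev k0` an eigenvalue of `L_D`, one has
`(z - E0) Ě_z[ψ] → E0 ‖L_D^{1/2} P_{E0} v‖² = E0 (E0 ∑_{Ev k = E0} |(b k,v)|²)`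
as `z → E0` off the eigenvalues.  Consequently, if `P_{E0} Πψ ≠ 0` then
`Ě_λ[ψ] → -∞` as `λ ↑ E0` and `Ě_λ[ψ] → +∞` as `λ ↓ E0`. -/
theorem stmt_10 {H : Type*} [NormedAddCommGroup H] [InnerProductSpace ℂ H]
    (b : HilbertBasis ℕ ℂ H)
    (Ev : ℕ → ℝ) (hEpos : ∀ k, 0 < Ev k)
    (hElim : Filter.Tendsto Ev Filter.atTop Filter.atTop)
    (v : H) (c : ℝ) (k0 : ℕ) (E0 : ℝ) (hE0 : E0 = Ev k0) :
    Filter.Tendsto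
      (fun z : ℂ => (z - (E0 : ℂ)) *
        ((c : ℂ) - z * ∑' k : ℕ,
          (Ev k : ℂ) / ((Ev k : ℂ) - z) * ((‖(inner ℂ (b k) v : ℂ)‖ : ℂ)) ^ 2))
      (nhdsWithin (E0 : ℂ) {z : ℂ | ∀ k, z ≠ (Ev k : ℂ)})
      (nhds ((E0 : ℂ) * ((E0 : ℂ) *
        ∑' k : ℕ, (if Ev k = E0 then ((‖(inner ℂ (b k) v : ℂ)‖ : ℂ)) ^ 2 else 0))))
    ∧ ((∃ k, Ev k = E0 ∧ (inner ℂ (b k) v : ℂ) ≠ 0) →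
        Filter.Tendsto
          (fun lam : ℝ => c - lam * ∑' k : ℕ,
            Ev k / (Ev k - lam) * ‖(inner ℂ (b k) v : ℂ)‖ ^ 2)
          (nhdsWithin E0 ({lam : ℝ | ∀ k, lam ≠ Ev k} ∩ Set.Iio E0)) atBot
        ∧ Filter.Tendsto
            (fun lam : ℝ => c - lam * ∑' k : ℕ,
              Ev k / (Ev k - lam) * ‖(inner ℂ (b k) v : ℂ)‖ ^ 2)
            (nhdsWithin E0 ({lam : ℝ | ∀ k, lam ≠ Ev k} ∩ Set.Ioi E0)) atTop) := by
  have hEv : Tendsto Ev cofinite atTop := Nat.cofinite_eq_atTop ▸ hElim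
  have ha : Summable fun k => ‖inner ℂ (b k) v‖ ^ 2 := b.orthonormal.inner_products_summable v
  refine ⟨?_, fun ⟨k1, hk1, hv⟩ => ?_⟩
  · have h := tendsto_sub_mul_sub_mul_tsum_resolvent (𝕜 := ℂ)
      (a := fun k => (‖inner ℂ (b k) v‖ : ℂ) ^ 2) hEv (by simpa using ha) c E0
    exact h.mono_left (nhdsWithin_mono _ fun z hz => hE0 ▸ hz k0)
  · have hsum : Summable fun k => if Ev k = E0 then ‖inner ℂ (b k) v‖ ^ 2 else 0 :=
      .of_nonneg_of_le (fun k => by positivity) (fun k => by split_ifs <;> simp) ha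
    have hres : 0 < ∑' k, if Ev k = E0 then ‖inner ℂ (b k) v‖ ^ 2 else 0 :=
      hsum.tsum_pos (fun k => by positivity) k1 <| by
        rw [if_pos hk1]; exact pow_pos (norm_pos_iff.2 hv) 2
    have hL : 0 < E0 * (E0 * ∑' k, if Ev k = E0 then ‖inner ℂ (b k) v‖ ^ 2 else 0) := by
      have := hk1 ▸ hEpos k1
      positivity
    have h := tendsto_sub_mul_sub_mul_tsum_resolvent (𝕜 := ℝ)
      (a := fun k => ‖inner ℂ (b k) v‖ ^ 2) hEv (by simpa using ha) c E0
    simp only [RCLike.ofReal_real_eq_id, id] at h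
    exact ⟨tendsto_atBot_of_tendsto_sub_mul Set.inter_subset_right hL
        (h.mono_left (nhdsWithin_mono _ fun y hy => (hy.2 : y < E0).ne)),
      tendsto_atTop_of_tendsto_sub_mul Set.inter_subset_right hL
        (h.mono_left (nhdsWithin_mono _ fun y hy => (hy.2 : E0 < y).ne'))⟩
end

section
/- Let E be a semi-Dirichlet form (i.e. u ∈ dom E implies |u| ∈ dom E and E[|u|] ≤ E[u]) on L²(X, m), and suppose J satisfies |Ju| = J|u| for all u ∈ dom J and the Dirichlet principle holds with unique minimizer. Then for every ψ ∈ ran J with ψ ≥ 0, the Poisson extension satisfies Πψ ≥ 0. -/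
open MeasureTheory

/-- Positivity of the Poisson extension.  Let `E` be a semi-Dirichlet form
on `L²(X,m)` with domain `D = dom J`, let `J` be compatible with absolute
values (`|Ju| = J|u|`), and suppose the Dirichlet principle holds with a
unique minimizer `P u` of `E` on `{v : Jv = Ju}`.  Then for every
`ψ = Ju ∈ ran J` with `ψ ≥ 0` the Poisson extension `Πψ = P u` is `≥ 0`. -/
theorem stmt_12 {X Y : Type*} [MeasurableSpace X] [MeasurableSpace Y]
    (m : Measure X) (μ : Measure Y)
    (D : Submodule ℝ (Lp ℝ 2 m))
    (E : Lp ℝ 2 m →ₗ[ℝ] Lp ℝ 2 m →ₗ[ℝ] ℝ)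
    (hsymm : ∀ f g : Lp ℝ 2 m, E f g = E g f)
    (hpos : ∀ v : D, 0 ≤ E (v : Lp ℝ 2 m) (v : Lp ℝ 2 m))
    (J : D →ₗ[ℝ] Lp ℝ 2 μ)
    (habs : ∀ u : D, |(u : Lp ℝ 2 m)| ∈ D)
    -- E is semi-Dirichlet
    (hSD : ∀ u : D, E |(u : Lp ℝ 2 m)| |(u : Lp ℝ 2 m)| ≤ E (u : Lp ℝ 2 m) (u : Lp ℝ 2 m))
    -- |Ju| = J|u|
    (hJabs : ∀ u : D, |J u| = J ⟨|(u : Lp ℝ 2 m)|, habs u⟩)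
    -- Dirichlet principle with unique minimizer P u
    (P : D → D)
    (hmin : ∀ u : D, J (P u) = J u ∧
      ∀ v : D, J v = J u → E ((P u : D) : Lp ℝ 2 m) ((P u : D) : Lp ℝ 2 m)
        ≤ E (v : Lp ℝ 2 m) (v : Lp ℝ 2 m))
    (huniq : ∀ u v : D, J v = J u →
      (∀ w : D, J w = J u → E (v : Lp ℝ 2 m) (v : Lp ℝ 2 m)
        ≤ E (w : Lp ℝ 2 m) (w : Lp ℝ 2 m)) → v = P u) :
    ∀ u : D, 0 ≤ J u → 0 ≤ ((P u : D) : Lp ℝ 2 m) := by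
  intro u hu
  set w : D := P u with hw
  -- the absolute value of w as an element of D
  set aw : D := ⟨|(w : Lp ℝ 2 m)|, habs w⟩ with haw
  have hJw : J w = J u := (hmin u).1
  have hJaw : J aw = J u := by
    rw [← hJabs w, hJw, abs_of_nonneg hu]
  -- aw is also a minimizer
  have hEaw : ∀ v : D, J v = J u → E (aw : Lp ℝ 2 m) (aw : Lp ℝ 2 m)
      ≤ E (v : Lp ℝ 2 m) (v : Lp ℝ 2 m) := by
    intro v hv
    calc E (aw : Lp ℝ 2 m) (aw : Lp ℝ 2 m) ≤ E (w : Lp ℝ 2 m) (w : Lp ℝ 2 m) := hSD w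
    _ ≤ E (v : Lp ℝ 2 m) (v : Lp ℝ 2 m) := (hmin u).2 v hv
  have : aw = P u := huniq u aw hJaw hEaw
  have h2 : |(w : Lp ℝ 2 m)| = (w : Lp ℝ 2 m) := by
    have := congrArg (fun x : D => (x : Lp ℝ 2 m)) this
    simpa [haw, hw] using this
  rw [← h2]
  exact abs_nonneg _
end

section
/- Under the same hypotheses (E semi-Dirichlet, |Ju| = J|u|, Dirichlet principle with unique minimizer), the trace form Ě is a semi-Dirichlet form on L²(X, μ): for every u ∈ dom J, Ě[|Ju|] ≤ Ě[Ju]. Hence the semigroup of the Dirichlet-to-Neumann operator at λ = 0 is positivity preserving. -/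
open MeasureTheory

/-- The trace form inherits the semi-Dirichlet property.  Under the same
hypotheses as for the positivity of the Poisson operator (`E`
semi-Dirichlet, `|Ju| = J|u|`, Dirichlet principle with a unique
minimizer), the trace form `Ě[ψ] = inf {E[v] : Jv = ψ}` satisfies
`Ě[|Ju|] ≤ Ě[Ju]` for every `u ∈ dom J`, i.e. `Ě` is a semi-Dirichlet
form on `L²(X,μ)` (so the Dirichlet-to-Neumann semigroup at `λ = 0` is
positivity preserving, by the first Beurling–Deny criterion). -/
theorem stmt_13 {X Y : Type*} [MeasurableSpace X] [MeasurableSpace Y]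
    (m : Measure X) (μ : Measure Y)
    (D : Submodule ℝ (Lp ℝ 2 m))
    (E : Lp ℝ 2 m →ₗ[ℝ] Lp ℝ 2 m →ₗ[ℝ] ℝ)
    (hsymm : ∀ f g : Lp ℝ 2 m, E f g = E g f)
    (hpos : ∀ v : D, 0 ≤ E (v : Lp ℝ 2 m) (v : Lp ℝ 2 m))
    (J : D →ₗ[ℝ] Lp ℝ 2 μ)
    (habs : ∀ u : D, |(u : Lp ℝ 2 m)| ∈ D)
    (hSD : ∀ u : D, E |(u : Lp ℝ 2 m)| |(u : Lp ℝ 2 m)| ≤ E (u : Lp ℝ 2 m) (u : Lp ℝ 2 m))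
    (hJabs : ∀ u : D, |J u| = J ⟨|(u : Lp ℝ 2 m)|, habs u⟩)
    (P : D → D)
    (hmin : ∀ u : D, J (P u) = J u ∧
      ∀ v : D, J v = J u → E ((P u : D) : Lp ℝ 2 m) ((P u : D) : Lp ℝ 2 m)
        ≤ E (v : Lp ℝ 2 m) (v : Lp ℝ 2 m))
    (huniq : ∀ u v : D, J v = J u →
      (∀ w : D, J w = J u → E (v : Lp ℝ 2 m) (v : Lp ℝ 2 m)
        ≤ E (w : Lp ℝ 2 m) (w : Lp ℝ 2 m)) → v = P u) :
    ∀ u : D,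
      sInf {x : ℝ | ∃ v : D, J v = |J u| ∧ E (v : Lp ℝ 2 m) (v : Lp ℝ 2 m) = x}
        ≤ sInf {x : ℝ | ∃ v : D, J v = J u ∧ E (v : Lp ℝ 2 m) (v : Lp ℝ 2 m) = x} := by
  intro u
  set p := P u with hp
  obtain ⟨hJp, hminp⟩ := hmin u
  set q : D := ⟨|(p : Lp ℝ 2 m)|, habs p⟩ with hq
  have hJq : J q = |J u| := by rw [hq, ← hJabs p, hp, hJp]
  have h1 : sInf {x : ℝ | ∃ v : D, J v = |J u| ∧ E (v : Lp ℝ 2 m) (v : Lp ℝ 2 m) = x}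
      ≤ E (q : Lp ℝ 2 m) (q : Lp ℝ 2 m) := by
    apply csInf_le
    · exact ⟨0, fun x ⟨v, _, hv⟩ => hv ▸ hpos v⟩
    · exact ⟨q, hJq, rfl⟩
  have h2 : E (q : Lp ℝ 2 m) (q : Lp ℝ 2 m) ≤ E (p : Lp ℝ 2 m) (p : Lp ℝ 2 m) := hSD p
  refine le_trans (le_trans h1 h2) (le_csInf ⟨_, p, hJp, rfl⟩ ?_)
  rintro x ⟨v, hv, rfl⟩
  exact hminp v hv
end
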